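/- arXiv:1007.0507 — 3 statements merged into one kernel-verified Lean document; each statement's English description precedes it below -/
import Mathlib

section
/- Let there be N short-range links with power vectors p_j ∈ ℝ^K (nonnegative components), K subbands, and for each subband k, M(k) macro receivers with path gains G_{ijk} > 0. Given positive load factors s_{ik} and spillage r_{jk} = Σ_i G_{ijk} s_{ik}, suppose each link j's utility U_j : ℝ^K → ℝ is strictly increasing in each coordinate and each p_j maximizes U_j subject to the constraint Σ_k r_{jk} p_{jk} ≤ λ_j with λ_j > 0. Then for any alternative nonnegative power vectors p'_j with U_j(p'_j) ≥ U_j(p_j) for all j and strict inequality for at least one j, there exist some i, k such that the interference q'_{ik} = Σ_j G_{ijk} p'_{jk} strictly exceeds q_{ik} = Σ_j G_{ijk} p_{jk}. -/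
/-- Theorem 1(a): Pareto optimality of load-spillage power control.
If each link `j` selects a nonnegative power vector `p j` maximizing its utility
subject to the spillage constraint `∑ k, r j k * p j k ≤ λ j` with
`r j k = ∑ i, G k i j * s k i`, then any alternative nonnegative powers `p'`
achieving at least as large utility for every link, strictly larger for some link,
must strictly increase the interference at some macro receiver in some subband. -/
theorem stmt_0
    (N K : ℕ) (M : Fin K → ℕ)
    (G : ∀ k : Fin K, Fin (M k) → Fin N → ℝ)
    (s : ∀ k : Fin K, Fin (M k) → ℝ)
    (lam : Fin N → ℝ)
    (U : Fin N → (Fin K → ℝ) → ℝ)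
    (p p' : Fin N → Fin K → ℝ)
    (hG : ∀ (k : Fin K) (i : Fin (M k)) (j : Fin N), 0 < G k i j)
    (hs : ∀ (k : Fin K) (i : Fin (M k)), 0 < s k i)
    (hlam : ∀ j, 0 < lam j)
    -- r j k is the spillage
    (r : Fin N → Fin K → ℝ)
    (hr : ∀ j k, r j k = ∑ i, G k i j * s k i)
    -- U j is strictly increasing in each coordinate
    (hU : ∀ (j : Fin N) (q : Fin K → ℝ) (k : Fin K) (x y : ℝ), x < y →
      U j (Function.update q k x) < U j (Function.update q k y))
    -- p j is nonnegative and feasible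
    (hp_nonneg : ∀ j k, 0 ≤ p j k)
    (hp_feas : ∀ j, ∑ k, r j k * p j k ≤ lam j)
    -- p j maximizes U j over the feasible set
    (hp_max : ∀ (j : Fin N) (q : Fin K → ℝ), (∀ k, 0 ≤ q k) →
      ∑ k, r j k * q k ≤ lam j → U j q ≤ U j (p j))
    -- alternative nonnegative powers with no smaller utility, strictly larger for one link
    (hp'_nonneg : ∀ j k, 0 ≤ p' j k)
    (hU_ge : ∀ j, U j (p j) ≤ U j (p' j))
    (hU_strict : ∃ j, U j (p j) < U j (p' j)) :
    ∃ (k : Fin K) (i : Fin (M k)),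
      (∑ j, G k i j * p j k) < (∑ j, G k i j * p' j k) := by
  by_contra hcon
  push_neg at hcon
  obtain ⟨j0, hj0⟩ := hU_strict
  rcases Nat.eq_zero_or_pos K with hK | hK
  · subst hK
    have hpe : p j0 = p' j0 := funext fun k => k.elim0
    rw [hpe] at hj0
    exact lt_irrefl _ hj0
  set k0 : Fin K := ⟨0, hK⟩ with hk0
  -- r j k is positive
  have hrpos : ∀ j k, 0 < r j k := by
    intro j k
    rcases lt_or_ge 0 (r j k) with h | h
    · exact h
    exfalso
    have h0 : r j k = 0 := le_antisymm h (by
      rw [hr]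
      exact Finset.sum_nonneg fun i _ => mul_nonneg (hG k i j).le (hs k i).le)
    set q := Function.update (p j) k (p j k + 1) with hq
    have hq_nonneg : ∀ k', 0 ≤ q k' := by
      intro k'
      rcases eq_or_ne k' k with rfl | hne
      · simp [hq]; linarith [hp_nonneg j k']
      · rw [hq, Function.update_of_ne hne]; exact hp_nonneg j k'
    have hfeas : ∑ k', r j k' * q k' ≤ lam j := by
      have : ∑ k', r j k' * q k' = ∑ k', r j k' * p j k' := by
        apply Finset.sum_congr rfl
        intro k' _
        rcases eq_or_ne k' k with rfl | hne
        · simp [h0]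
        · rw [hq, Function.update_of_ne hne]
      rw [this]; exact hp_feas j
    have hle := hp_max j q hq_nonneg hfeas
    have hlt : U j (p j) < U j q := by
      have := hU j (p j) k (p j k) (p j k + 1) (by linarith)
      rwa [Function.update_eq_self] at this
    linarith
  -- each p' j violates (weakly) the budget
  have hge : ∀ j, lam j ≤ ∑ k, r j k * p' j k := by
    intro j
    by_contra hlt
    push_neg at hlt
    set S := ∑ k, r j k * p' j k with hS
    set δ := (lam j - S) / r j k0 with hδdef
    have hδ : 0 < δ := div_pos (by linarith) (hrpos j k0)
    set q := Function.update (p' j) k0 (p' j k0 + δ) with hq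
    have hq_eq : ∀ k, q k = p' j k + if k = k0 then δ else 0 := by
      intro k
      rcases eq_or_ne k k0 with rfl | hne
      · simp [hq]
      · rw [hq, Function.update_of_ne hne]; simp [hne]
    have hq_nonneg : ∀ k, 0 ≤ q k := by
      intro k
      rw [hq_eq]
      have := hp'_nonneg j k
      split <;> linarith
    have hsum : ∑ k, r j k * q k = S + r j k0 * δ := by
      have : ∀ k, r j k * q k = r j k * p' j k + (if k = k0 then r j k * δ else 0) := by
        intro k
        rw [hq_eq]
        split <;> ring
      rw [Finset.sum_congr rfl fun k _ => this k, Finset.sum_add_distrib,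
        Finset.sum_ite_eq' Finset.univ k0 (fun k => r j k * δ)]
      simp [hS]
    have hfeas : ∑ k, r j k * q k ≤ lam j := by
      rw [hsum]
      have : r j k0 * δ = lam j - S := by
        rw [hδdef, mul_div_cancel₀ _ (hrpos j k0).ne']
      linarith
    have hle := hp_max j q hq_nonneg hfeas
    have hlt2 : U j (p' j) < U j q := by
      have := hU j (p' j) k0 (p' j k0) (p' j k0 + δ) (by linarith)
      rwa [Function.update_eq_self] at this
    have := hU_ge j
    linarith
  -- p' j0 strictly violates the budget
  have hgt : lam j0 < ∑ k, r j0 k * p' j0 k := by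
    by_contra hle
    push_neg at hle
    exact absurd (hp_max j0 (p' j0) (hp'_nonneg j0) hle) (not_le.mpr hj0)
  have hsum1 : ∑ j, ∑ k, r j k * p j k ≤ ∑ j, lam j :=
    Finset.sum_le_sum fun j _ => hp_feas j
  have hsum2 : ∑ j, lam j < ∑ j, ∑ k, r j k * p' j k :=
    Finset.sum_lt_sum (fun j _ => hge j) ⟨j0, Finset.mem_univ _, hgt⟩
  have expand : ∀ (k : Fin K) (x : Fin N → Fin K → ℝ),
      ∑ j, r j k * x j k = ∑ i, s k i * ∑ j, G k i j * x j k := by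
    intro k x
    simp only [hr, Finset.sum_mul, Finset.mul_sum]
    rw [Finset.sum_comm]
    exact Finset.sum_congr rfl fun i _ => Finset.sum_congr rfl fun j _ => by ring
  have key : ∑ j, ∑ k, r j k * p' j k ≤ ∑ j, ∑ k, r j k * p j k := by
    rw [Finset.sum_comm (f := fun j k => r j k * p' j k), Finset.sum_comm (f := fun j k => r j k * p j k)]
    apply Finset.sum_le_sum
    intro k _
    rw [expand k p', expand k p]
    exact Finset.sum_le_sum fun i _ =>
      mul_le_mul_of_nonneg_left (hcon k i) (hs k i).le
  linarith
end

section
/- Let A be an m × n real matrix such that for every v ∈ ℝⁿ there exists an index i with (Av)_i ≤ 0. Then there exists w ∈ ℝ^m with w_i ≥ 0 for all i, Σ_i w_i = 1, and wᵀA = 0. -/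
/-! The image of the standard simplex under `w ↦ w ᵥ* A` is compact and convex. If it missed `0`,
Hahn–Banach would give a functional `x ↦ v ⬝ᵥ x` negative on it; evaluating at the images of the
vertices, i.e. the rows of `A`, gives `0 < (A *ᵥ -v) i` for every `i`, against the hypothesis. -/

open Matrix

theorem StrongDual.exists_eq_dotProduct {n : Type*} [Fintype n] (f : StrongDual ℝ (n → ℝ)) :
    ∃ v : n → ℝ, ∀ x, f x = v ⬝ᵥ x := by
  classical
  exact ⟨(dotProductEquiv ℝ n).symm f, fun x ↦
    (LinearMap.congr_fun ((dotProductEquiv ℝ n).apply_symm_apply f.toLinearMap) x).symm⟩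

section Gordan

variable {m n : Type*} [Fintype m] (A : Matrix m n ℝ)

theorem convex_vecMul_image_stdSimplex : Convex ℝ ((· ᵥ* A) '' stdSimplex ℝ m) :=
  (convex_stdSimplex ℝ m).linear_image A.vecMulLinear

theorem isCompact_vecMul_image_stdSimplex : IsCompact ((· ᵥ* A) '' stdSimplex ℝ m) :=
  (isCompact_stdSimplex ℝ m).image A.vecMulLinear.continuous_of_finiteDimensional

variable [Fintype n]

theorem exists_forall_mulVec_pos_of_zero_notMem_vecMul_image_stdSimplex
    (h0 : (0 : n → ℝ) ∉ (· ᵥ* A) '' stdSimplex ℝ m) : ∃ v, ∀ i, 0 < (A *ᵥ v) i := by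
  classical
  obtain ⟨f, u, hfu, hu⟩ := geometric_hahn_banach_closed_point
    (convex_vecMul_image_stdSimplex A) (isCompact_vecMul_image_stdSimplex A).isClosed h0
  obtain ⟨v, hv⟩ := f.exists_eq_dotProduct
  refine ⟨-v, fun i ↦ ?_⟩
  have hrow : f (A i) < 0 :=
    (hfu (A i) ⟨_, single_mem_stdSimplex ℝ i, by simp [Matrix.row]⟩).trans (by simpa using hu)
  rw [hv, dotProduct_comm] at hrow
  rw [mulVec_neg, Pi.neg_apply, neg_pos]
  exact hrow

theorem exists_mem_stdSimplex_vecMul_eq_zero (h : ∀ v, ∃ i, (A *ᵥ v) i ≤ 0) :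
    ∃ w ∈ stdSimplex ℝ m, w ᵥ* A = 0 := by
  by_contra! hA
  obtain ⟨v, hv⟩ := exists_forall_mulVec_pos_of_zero_notMem_vecMul_image_stdSimplex A
    fun ⟨w, hw, hw0⟩ ↦ hA w hw hw0
  obtain ⟨i, hi⟩ := h v
  exact (hv i).not_ge hi

end Gordan

/-- Lemma 2: if for every `v ∈ ℝⁿ` some component of `A v` is `≤ 0`, then there is
a probability vector `w` in the simplex of `ℝ^m` with `wᵀ A = 0`. -/
theorem stmt_2
    (m n : ℕ) (A : Matrix (Fin m) (Fin n) ℝ)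
    (h : ∀ v : Fin n → ℝ, ∃ i : Fin m, A.mulVec v i ≤ 0) :
    ∃ w : Fin m → ℝ, (∀ i, 0 ≤ w i) ∧ (∑ i, w i = 1) ∧ Matrix.vecMul w A = 0 := by
  obtain ⟨w, ⟨hw_nonneg, hw_sum⟩, hwA⟩ := exists_mem_stdSimplex_vecMul_eq_zero A h
  exact ⟨w, hw_nonneg, hw_sum, hwA⟩
end

section
/- Under the hypotheses of Theorem 1(b) — utilities U_j concave, twice differentiable, strictly increasing coordinatewise, and G_{ijk} > 0 — if the collection of power vectors (p_j) is Pareto optimal, then there exist nonnegative load factors s_{ik} and bounds λ_j such that each p_j maximizes U_j(p) subject to Σ_k r_{jk} p_k ≤ λ_j, where r_{jk} = Σ_i G_{ijk} s_{ik}. -/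
/-!
The set of outcome vectors (utilities, negated interferences) that are dominated by some
achievable outcome is convex, because the utilities are concave and the interferences linear.
A Pareto optimal outcome is not strictly dominated, so a hyperplane separates it from the interior
of that set; its normal is a nonnegative weight vector `(α, s)` for which `p` maximizes
`∑ j, α j * U j (p' j) - ∑ s · interference`. This objective splits over the users, so each `p j`
maximizes the Lagrangian `α j * U j q - r j ⬝ᵥ q`, where `r j k = ∑ i, G k i j * s k i`.
Finally `α j > 0`: otherwise `r j = 0` forces `s = 0` (the gains are positive), and then some
user with positive weight would have a global maximum of its strictly increasing utility.
-/

open Finset Filter Topology Pointwise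

lemma nonneg_of_forall_sub_mul_lt {a b c : ℝ} (h : ∀ t : ℝ, 0 < t → a - t * b < c) : 0 ≤ b := by
  by_contra! hb
  have key := h ((|c - a| + 1) / -b) (div_pos (by positivity) (neg_pos.2 hb))
  have : (|c - a| + 1) / -b * b = -(|c - a| + 1) := by field_simp [hb.ne]
  linarith [le_abs_self (c - a)]

lemma le_of_forall_sub_mul_lt {a b c : ℝ} (h : ∀ t : ℝ, 0 < t → a - t * b < c) : a ≤ c := by
  have hlim : Tendsto (fun t : ℝ => a - t * b) (𝓝[>] 0) (𝓝 a) :=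
    tendsto_nhdsWithin_of_tendsto_nhds <|
      (by fun_prop : Continuous fun t : ℝ => a - t * b).tendsto' 0 a (by simp)
  exact le_of_tendsto hlim (eventually_nhdsWithin_of_forall fun t ht => (h t ht).le)

theorem exists_nonneg_weights_dotProduct_le {ι : Type*} [Fintype ι] {S : Set (ι → ℝ)}
    (hS : Convex ℝ (lowerClosure S : Set (ι → ℝ))) (hS₀ : S.Nonempty) {y₀ : ι → ℝ}
    (hy₀ : ∀ y ∈ S, ∃ i, y i ≤ y₀ i) :
    ∃ w : ι → ℝ, 0 ≤ w ∧ w ≠ 0 ∧ ∀ y ∈ S, w ⬝ᵥ y ≤ w ⬝ᵥ y₀ := by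
  classical
  -- Separate `y₀` from the open convex set of outcomes strictly dominated by a point of `S`.
  set O : Set (ι → ℝ) := Set.univ.pi fun _ => Set.Iio 0
  have hO : IsOpen O := isOpen_set_pi Set.finite_univ fun _ _ => isOpen_Iio
  have hC : Convex ℝ ((lowerClosure S : Set (ι → ℝ)) + O) :=
    hS.add (convex_pi fun _ _ => convex_Iio 0)
  have hy₀C : y₀ ∉ (lowerClosure S : Set (ι → ℝ)) + O := by
    rintro ⟨d, hd, o, ho, hdo⟩
    obtain ⟨y, hy, hdy⟩ := mem_lowerClosure.1 hd
    obtain ⟨i, hi⟩ := hy₀ y hy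
    have : y₀ i = d i + o i := by rw [← hdo]; rfl
    have hoi : o i < 0 := Set.mem_univ_pi.1 ho i
    linarith [hdy i]
  obtain ⟨f, hf⟩ := geometric_hahn_banach_open_point hC hO.add_left hy₀C
  set w : ι → ℝ := fun i => f fun j => if i = j then 1 else 0
  have hfw : ∀ y, f y = w ⬝ᵥ y := fun y => by
    rw [dotProduct_comm]; exact f.toLinearMap.pi_apply_eq_sum_univ y
  have hlt : ∀ y ∈ S, ∀ o : ι → ℝ, (∀ i, o i < 0) → w ⬝ᵥ y + w ⬝ᵥ o < w ⬝ᵥ y₀ := by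
    intro y hy o ho
    rw [← dotProduct_add, ← hfw, ← hfw]
    exact hf _ (Set.add_mem_add (subset_lowerClosure hy) (Set.mem_univ_pi.2 ho))
  obtain ⟨y, hy⟩ := hS₀
  refine ⟨w, fun i => ?_, fun hw => ?_, fun y' hy' => ?_⟩
  · refine nonneg_of_forall_sub_mul_lt (a := w ⬝ᵥ y - w ⬝ᵥ 1) (c := w ⬝ᵥ y₀) fun t ht => ?_
    have := hlt y hy (-1 - t • Pi.single i 1) fun j => by
      have : (0 : ℝ) ≤ t * (Pi.single i 1 : ι → ℝ) j :=
        mul_nonneg ht.le (by rw [Pi.single_apply]; split_ifs <;> norm_num)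
      simp only [Pi.sub_apply, Pi.neg_apply, Pi.one_apply, Pi.smul_apply, smul_eq_mul]
      linarith
    simpa [dotProduct_sub, dotProduct_smul, dotProduct_single, sub_eq_add_neg, add_assoc] using this
  · simpa [hw] using hlt y hy (-1) fun _ => by norm_num
  · refine le_of_forall_sub_mul_lt (b := w ⬝ᵥ 1) fun t ht => ?_
    simpa [dotProduct_neg, dotProduct_smul, sub_eq_add_neg] using
      hlt y' hy' (-(t • 1)) fun _ => by simpa using ht

lemma apply_le_of_forall_sum_le {ι α : Type*} [Fintype ι] [DecidableEq ι] (φ : ι → α → ℝ)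
    {p : ι → α} (h : ∀ p' : ι → α, ∑ j, φ j (p' j) ≤ ∑ j, φ j (p j)) (j : ι) (q : α) :
    φ j q ≤ φ j (p j) := by
  have := h (Function.update p j q)
  simp only [Function.apply_update φ p j q] at this
  rwa [sum_update_of_mem (mem_univ j), sum_eq_add_sum_sdiff_singleton_of_mem (mem_univ j),
    add_le_add_iff_right] at this

lemma eq_zero_of_forall_dotProduct_le {ι : Type*} [Fintype ι] {r p : ι → ℝ}
    (h : ∀ q, r ⬝ᵥ p ≤ r ⬝ᵥ q) : r = 0 := by
  have hle := h (p - r)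
  rw [dotProduct_sub] at hle
  exact dotProduct_self_eq_zero.1 <|
    le_antisymm (by linarith) (Fintype.sum_nonneg fun _ => mul_self_nonneg _)

lemma exists_lt_of_strictMono_update {κ : Type*} [Nonempty κ] [DecidableEq κ]
    {f : (κ → ℝ) → ℝ}
    (hf : ∀ (q : κ → ℝ) (k : κ) (x y : ℝ), x < y →
      f (Function.update q k x) < f (Function.update q k y))
    (q : κ → ℝ) : ∃ q', f q < f q' := by
  obtain ⟨k⟩ := ‹Nonempty κ›
  refine ⟨Function.update q k (q k + 1), ?_⟩
  simpa using hf q k (q k) (q k + 1) (lt_add_one _)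

namespace PowerControl

variable {N K : ℕ} {M : Fin K → ℕ}

abbrev Receiver (M : Fin K → ℕ) := (k : Fin K) × Fin (M k)

def interference (G : ∀ k : Fin K, Fin (M k) → Fin N → ℝ) (p : Fin N → Fin K → ℝ)
    (t : Receiver M) : ℝ :=
  ∑ j, G t.1 t.2 j * p j t.1

/-- The vector of utilities and negated interferences: every coordinate is to be maximized. -/
def outcome (G : ∀ k : Fin K, Fin (M k) → Fin N → ℝ) (U : Fin N → (Fin K → ℝ) → ℝ)
    (p : Fin N → Fin K → ℝ) : Fin N ⊕ Receiver M → ℝ :=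
  Sum.elim (fun j => U j (p j)) (fun t => -interference G p t)

def spillage (G : ∀ k : Fin K, Fin (M k) → Fin N → ℝ) (s : ∀ k : Fin K, Fin (M k) → ℝ)
    (j : Fin N) : Fin K → ℝ :=
  fun k => ∑ i, G k i j * s k i

variable {G : ∀ k : Fin K, Fin (M k) → Fin N → ℝ} {U : Fin N → (Fin K → ℝ) → ℝ}

lemma interference_smul_add_smul (p₁ p₂ : Fin N → Fin K → ℝ) (a b : ℝ) (t : Receiver M) :
    interference G (a • p₁ + b • p₂) t = a * interference G p₁ t + b * interference G p₂ t := by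
  simp only [interference, mul_sum, ← sum_add_distrib, Pi.add_apply, Pi.smul_apply, smul_eq_mul]
  exact sum_congr rfl fun _ _ => by ring

lemma smul_add_smul_outcome_le (hU : ∀ j, ConcaveOn ℝ Set.univ (U j))
    (p₁ p₂ : Fin N → Fin K → ℝ) {a b : ℝ} (ha : 0 ≤ a) (hb : 0 ≤ b) (hab : a + b = 1) :
    a • outcome G U p₁ + b • outcome G U p₂ ≤ outcome G U (a • p₁ + b • p₂) := by
  rintro (j | t)
  · exact (hU j).2 (Set.mem_univ _) (Set.mem_univ _) ha hb hab
  · simp only [outcome, Pi.add_apply, Pi.smul_apply, Sum.elim_inr, smul_eq_mul,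
      interference_smul_add_smul]
    linarith

lemma convex_lowerClosure_range_outcome (hU : ∀ j, ConcaveOn ℝ Set.univ (U j)) :
    Convex ℝ (lowerClosure (Set.range (outcome G U)) : Set (Fin N ⊕ Receiver M → ℝ)) := by
  rintro _ ⟨_, ⟨p₁, rfl⟩, h₁⟩ _ ⟨_, ⟨p₂, rfl⟩, h₂⟩ a b ha hb hab
  refine ⟨_, ⟨a • p₁ + b • p₂, rfl⟩, ?_⟩
  calc _ ≤ a • outcome G U p₁ + b • outcome G U p₂ := by gcongr
    _ ≤ _ := smul_add_smul_outcome_le hU p₁ p₂ ha hb hab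

lemma sum_mul_interference (s : ∀ k : Fin K, Fin (M k) → ℝ) (p : Fin N → Fin K → ℝ) :
    ∑ t : Receiver M, s t.1 t.2 * interference G p t = ∑ j, spillage G s j ⬝ᵥ p j := by
  simp only [interference, spillage, dotProduct, Fintype.sum_sigma, mul_sum, sum_mul]
  rw [sum_comm]
  refine sum_congr rfl fun k _ => ?_
  rw [sum_comm]
  exact sum_congr rfl fun _ _ => sum_congr rfl fun _ _ => by ring

lemma dotProduct_outcome (α : Fin N → ℝ) (s : ∀ k : Fin K, Fin (M k) → ℝ)
    (p : Fin N → Fin K → ℝ) :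
    Sum.elim α (fun t : Receiver M => s t.1 t.2) ⬝ᵥ outcome G U p
      = ∑ j, (α j * U j (p j) - spillage G s j ⬝ᵥ p j) := by
  rw [dotProduct, Fintype.sum_sum_type, sum_sub_distrib, ← sum_mul_interference]
  simp only [outcome, Sum.elim_inl, Sum.elim_inr, mul_neg, sum_neg_distrib, sub_eq_add_neg]

@[simp]
lemma spillage_zero : spillage G 0 = 0 := by
  funext j k
  simp [spillage]

lemma eq_zero_of_spillage_eq_zero (hG : ∀ k i j, 0 < G k i j) {s : ∀ k : Fin K, Fin (M k) → ℝ}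
    (hs : 0 ≤ s) {j : Fin N} (h : spillage G s j = 0) : s = 0 := by
  funext k i
  have hterm := (sum_eq_zero_iff_of_nonneg fun i _ => mul_nonneg (hG k i j).le (hs k i)).1
    (congrFun h k) i (mem_univ i)
  exact (mul_eq_zero.1 hterm).resolve_left (hG k i j).ne'

theorem pos_of_maximizes_lagrangian [Nonempty (Fin K)] (hG : ∀ k i j, 0 < G k i j)
    (hU_mono : ∀ (j : Fin N) (q : Fin K → ℝ) (k : Fin K) (x y : ℝ), x < y →
      U j (Function.update q k x) < U j (Function.update q k y))
    {p : Fin N → Fin K → ℝ} {α : Fin N → ℝ} {s : ∀ k : Fin K, Fin (M k) → ℝ}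
    (hα : 0 ≤ α) (hs : 0 ≤ s) (hne : Sum.elim α (fun t : Receiver M => s t.1 t.2) ≠ 0)
    (hmax : ∀ j q, α j * U j q - spillage G s j ⬝ᵥ q ≤ α j * U j (p j) - spillage G s j ⬝ᵥ p j)
    (j : Fin N) : 0 < α j := by
  by_contra! hj
  have hαj : α j = 0 := le_antisymm hj (hα j)
  have hs0 : s = 0 := eq_zero_of_spillage_eq_zero hG hs <|
    eq_zero_of_forall_dotProduct_le fun q => by simpa [hαj] using hmax j q
  obtain ⟨j', hj'⟩ : ∃ j', α j' ≠ 0 := by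
    by_contra! h
    exact hne (by ext (j | t) <;> simp [h, hs0])
  obtain ⟨q, hq⟩ := exists_lt_of_strictMono_update (hU_mono j') (p j')
  have hle : α j' * U j' q ≤ α j' * U j' (p j') := by
    simpa [hs0] using hmax j' q
  exact hq.not_ge (le_of_mul_le_mul_left hle ((hα j').lt_of_ne' hj'))

end PowerControl

open PowerControl

theorem stmt_7_general
    (N K : ℕ) (M : Fin K → ℕ)
    (G : ∀ k : Fin K, Fin (M k) → Fin N → ℝ)
    (U : Fin N → (Fin K → ℝ) → ℝ)
    (p : Fin N → Fin K → ℝ)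
    (hG : ∀ (k : Fin K) (i : Fin (M k)) (j : Fin N), 0 < G k i j)
    (hU_concave : ∀ j, ConcaveOn ℝ Set.univ (U j))
    (hU_mono : ∀ (j : Fin N) (q : Fin K → ℝ) (k : Fin K) (x y : ℝ), x < y →
      U j (Function.update q k x) < U j (Function.update q k y))
    -- Pareto optimality: no alternative powers weakly improve all utilities and all
    -- interferences with at least one strict improvement.
    (h_pareto : ¬ ∃ p' : Fin N → Fin K → ℝ,
      (∀ j, U j (p j) ≤ U j (p' j)) ∧
      (∀ (k : Fin K) (i : Fin (M k)), (∑ j, G k i j * p' j k) ≤ ∑ j, G k i j * p j k) ∧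
      ((∃ j, U j (p j) < U j (p' j)) ∨
       (∃ (k : Fin K) (i : Fin (M k)), (∑ j, G k i j * p' j k) < ∑ j, G k i j * p j k))) :
    ∃ (s : ∀ k : Fin K, Fin (M k) → ℝ) (lam : Fin N → ℝ),
      (∀ (k : Fin K) (i : Fin (M k)), 0 ≤ s k i) ∧
      (∀ j, ∑ k, (∑ i, G k i j * s k i) * p j k ≤ lam j) ∧
      (∀ (j : Fin N) (q : Fin K → ℝ),
        ∑ k, (∑ i, G k i j * s k i) * q k ≤ lam j → U j q ≤ U j (p j)) := by
  rcases isEmpty_or_nonempty (Fin N) with hN | hN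
  · exact ⟨0, 0, fun _ _ => le_rfl, isEmptyElim, isEmptyElim⟩
  rcases isEmpty_or_nonempty (Fin K) with hK | hK
  · exact ⟨0, 0, fun _ _ => le_rfl, fun _ => by simp,
      fun j q _ => (congrArg (U j) (Subsingleton.elim q (p j))).le⟩
  have hundominated : ∀ y ∈ Set.range (outcome G U), ∃ i, y i ≤ outcome G U p i := by
    rintro _ ⟨p', rfl⟩
    by_contra! h
    exact h_pareto ⟨p', fun j => (h (.inl j)).le, fun k i => neg_le_neg_iff.1 (h (.inr ⟨k, i⟩)).le,
      .inl ⟨Classical.arbitrary _, h (.inl _)⟩⟩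
  obtain ⟨w, hw0, hw, hmax⟩ := exists_nonneg_weights_dotProduct_le
    (convex_lowerClosure_range_outcome hU_concave) (Set.range_nonempty _) hundominated
  obtain ⟨α, s, rfl⟩ : ∃ (α : Fin N → ℝ) (s : ∀ k : Fin K, Fin (M k) → ℝ),
      w = Sum.elim α (fun t : Receiver M => s t.1 t.2) :=
    ⟨fun j => w (.inl j), fun k i => w (.inr ⟨k, i⟩), by ext (j | t) <;> rfl⟩
  have hlag : ∀ j q, α j * U j q - spillage G s j ⬝ᵥ q ≤ α j * U j (p j) - spillage G s j ⬝ᵥ p j :=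
    apply_le_of_forall_sum_le (fun j q => α j * U j q - spillage G s j ⬝ᵥ q) fun p' => by
      simpa only [dotProduct_outcome] using hmax _ ⟨p', rfl⟩
  have hs : 0 ≤ s := fun k i => hw0 (.inr ⟨k, i⟩)
  have hα : ∀ j, 0 < α j :=
    pos_of_maximizes_lagrangian hG hU_mono (fun j => hw0 (.inl j)) hs hw hlag
  refine ⟨s, fun j => spillage G s j ⬝ᵥ p j, hs, fun j => le_rfl, fun j q hq => ?_⟩
  change spillage G s j ⬝ᵥ q ≤ spillage G s j ⬝ᵥ p j at hq
  exact le_of_mul_le_mul_left (by linarith [hlag j q]) (hα j)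

/-- Theorem 1(b) (converse): if the utilities are concave, twice continuously
differentiable and strictly increasing coordinatewise, all gains are positive, and
the collection of power vectors `p` is Pareto optimal, then there exist nonnegative
load factors `s k i` and bounds `λ j` such that each `p j` maximizes `U j` subject
to the spillage constraint `∑ k, r j k * q k ≤ λ j` with `r j k = ∑ i, G k i j * s k i`. -/
theorem stmt_7
    (N K : ℕ) (M : Fin K → ℕ)
    (G : ∀ k : Fin K, Fin (M k) → Fin N → ℝ)
    (U : Fin N → (Fin K → ℝ) → ℝ)
    (p : Fin N → Fin K → ℝ)
    (hG : ∀ (k : Fin K) (i : Fin (M k)) (j : Fin N), 0 < G k i j)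
    (hU_concave : ∀ j, ConcaveOn ℝ Set.univ (U j))
    (hU_smooth : ∀ j, ContDiff ℝ 2 (U j))
    (hU_mono : ∀ (j : Fin N) (q : Fin K → ℝ) (k : Fin K) (x y : ℝ), x < y →
      U j (Function.update q k x) < U j (Function.update q k y))
    -- Pareto optimality: no alternative powers weakly improve all utilities and all
    -- interferences with at least one strict improvement.
    (h_pareto : ¬ ∃ p' : Fin N → Fin K → ℝ,
      (∀ j, U j (p j) ≤ U j (p' j)) ∧
      (∀ (k : Fin K) (i : Fin (M k)), (∑ j, G k i j * p' j k) ≤ ∑ j, G k i j * p j k) ∧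
      ((∃ j, U j (p j) < U j (p' j)) ∨
       (∃ (k : Fin K) (i : Fin (M k)), (∑ j, G k i j * p' j k) < ∑ j, G k i j * p j k))) :
    ∃ (s : ∀ k : Fin K, Fin (M k) → ℝ) (lam : Fin N → ℝ),
      (∀ (k : Fin K) (i : Fin (M k)), 0 ≤ s k i) ∧
      (∀ j, ∑ k, (∑ i, G k i j * s k i) * p j k ≤ lam j) ∧
      (∀ (j : Fin N) (q : Fin K → ℝ),
        ∑ k, (∑ i, G k i j * s k i) * q k ≤ lam j → U j q ≤ U j (p j)) :=
  stmt_7_general N K M G U p hG hU_concave hU_mono h_pareto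
end
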